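/- For n ≥ 2, in the special case λ = (2, 1^{n−2}) of binary partitions, r_λ = |B_σ| for σ a single transposition, i.e. the number of phylogenetic trees on n leaves fixed by a single transposition, equals ∏_{i=2}^{n−1} (2(n−i)−1) = (2(n−2)−1)·(2(n−3)−1)···1 = (2n−5)!!. -/

import Mathlib

universe u
variable {α β : Type u}

/-- Rooted binary trees with labelled leaves (embedded). -/
inductive RTree (α : Type u) : Type u
  | leaf : α → RTree α
  | node : RTree α → RTree α → RTree α

namespace RTree

def relabel (f : α → β) : RTree α → RTree β
  | .leaf a => .leaf (f a)
  | .node l r => .node (l.relabel f) (r.relabel f)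

def leaves : RTree α → Multiset α
  | .leaf a => {a}
  | .node l r => l.leaves + r.leaves

/-- Identification of non-embedded trees: the two children of a node are unordered. -/
inductive TEquiv : RTree α → RTree α → Prop
  | leaf (a : α) : TEquiv (.leaf a) (.leaf a)
  | node {l r l' r'} : TEquiv l l' → TEquiv r r' → TEquiv (.node l r) (.node l' r')
  | swap {l r l' r'} : TEquiv l r' → TEquiv r l' → TEquiv (.node l r) (.node l' r')

theorem TEquiv.leaves_eq {t t' : RTree α} (h : TEquiv t t') : t.leaves = t'.leaves := by
  induction h with
  | leaf a => rfl
  | node _ _ ih1 ih2 => simp [leaves, ih1, ih2]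
  | swap _ _ ih1 ih2 => simp [leaves, ih1, ih2, add_comm]

theorem TEquiv.relabel_congr (f : α → β) {t t' : RTree α} (h : TEquiv t t') :
    TEquiv (t.relabel f) (t'.relabel f) := by
  induction h with
  | leaf a => exact .leaf _
  | node _ _ ih1 ih2 => exact .node ih1 ih2
  | swap _ _ ih1 ih2 => exact .swap ih1 ih2

end RTree

/-- Phylogenetic (rooted, non-embedded, leaf-labelled) trees with labels in `α`. -/
def PTree (α : Type u) : Type u := Quot (@RTree.TEquiv α)

namespace PTree

def leaves : PTree α → Multiset α :=
  Quot.lift RTree.leaves fun _ _ h => h.leaves_eq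

def relabel (f : α → α) : PTree α → PTree α :=
  Quot.lift (fun t => Quot.mk _ (t.relabel f)) fun _ _ h => Quot.sound (h.relabel_congr f)

end PTree

/-- The phylogenetic trees with leaf label set `A` that are fixed by the relabelling
action of `σ`. -/
def fixedTrees (σ : Equiv.Perm α) (A : Finset α) : Set (PTree α) :=
  {t | t.leaves = A.val ∧ t.relabel σ = t}

/-- The orbit (cycle) of `a` under the permutation `σ`, as a finset. -/
noncomputable def orbitF [Fintype α] (σ : Equiv.Perm α) (a : α) : Finset α := by
  classical exact Finset.univ.filter fun x => σ.SameCycle a x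

/-- `∏_{i=2}^{ℓ} (2(λ_i + ⋯ + λ_ℓ) - 1)` where the parts `λ_1 ≥ λ_2 ≥ ⋯ ≥ λ_ℓ` are the
elements of `m` in non-increasing order: equivalently, the factors are `2 s - 1` where `s`
runs over the sums of the `j` smallest parts, `j = 1, …, ℓ - 1`. -/
def prodFormula (m : Multiset ℕ) : ℕ :=
  ∏ j ∈ Finset.range (m.card - 1), (2 * ((m.sort (· ≤ ·)).take (j + 1)).sum - 1)

/-- `z_λ = ∏_m m^{m_m} · m_m!` where `m_m` is the multiplicity of `m`. -/
def zPart (m : Multiset ℕ) : ℕ :=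
  ∏ p ∈ m.toFinset, p ^ m.count p * (m.count p).factorial

-- ===================== auxiliary development =====================

namespace RTree

theorem tequiv_refl : ∀ t : RTree α, TEquiv t t
  | .leaf a => .leaf a
  | .node l r => .node (tequiv_refl l) (tequiv_refl r)

theorem card_leaves_pos : ∀ t : RTree α, 0 < Multiset.card t.leaves
  | .leaf a => by simp [leaves]
  | .node l r => by
      have := card_leaves_pos l
      simp only [leaves, Multiset.card_add]
      omega

theorem leaves_eq_singleton {t : RTree α} {x : α} (h : t.leaves = {x}) : t = .leaf x := by
  cases t with
  | leaf a => simp [leaves] at h; rw [h]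
  | node l r =>
      have h1 := card_leaves_pos l
      have h2 := card_leaves_pos r
      have : Multiset.card (leaves (node l r)) = 1 := by rw [h]; simp
      simp only [leaves, Multiset.card_add] at this
      omega

theorem leaves_relabel (f : α → β) : ∀ t : RTree α, (t.relabel f).leaves = t.leaves.map f
  | .leaf a => by simp [relabel, leaves]
  | .node l r => by simp [relabel, leaves, leaves_relabel f l, leaves_relabel f r]

theorem relabel_id_on {f : α → α} : ∀ {t : RTree α}, (∀ y ∈ t.leaves, f y = y) → t.relabel f = t
  | .leaf a, h => by simp [relabel, h a (by simp [leaves])]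
  | .node l r, h => by
      rw [relabel, relabel_id_on (fun y hy => h y (by simp [leaves, hy])),
        relabel_id_on (fun y hy => h y (by simp [leaves, hy]))]

section Key
variable [LinearOrder α]

def mkey : RTree α → α
  | .leaf a => a
  | .node l r => min (mkey l) (mkey r)

theorem mkey_mem : ∀ t : RTree α, t.mkey ∈ t.leaves
  | .leaf a => by simp [leaves, mkey]
  | .node l r => by
      simp only [leaves, mkey, Multiset.mem_add]
      rcases min_cases l.mkey r.mkey with ⟨h, _⟩ | ⟨h, _⟩
      · exact Or.inl (by rw [h]; exact mkey_mem l)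
      · exact Or.inr (by rw [h]; exact mkey_mem r)

theorem mkey_le : ∀ (t : RTree α), ∀ y ∈ t.leaves, t.mkey ≤ y
  | .leaf a, y, hy => by simp [leaves] at hy; simp [mkey, hy]
  | .node l r, y, hy => by
      simp only [leaves, Multiset.mem_add] at hy
      rcases hy with hy | hy
      · exact le_trans (min_le_left _ _) (mkey_le l y hy)
      · exact le_trans (min_le_right _ _) (mkey_le r y hy)

theorem mkey_congr {t t' : RTree α} (h : t.leaves = t'.leaves) : t.mkey = t'.mkey :=
  le_antisymm (mkey_le t _ (h ▸ mkey_mem t')) (mkey_le t' _ (h.symm ▸ mkey_mem t))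

def norm : RTree α → RTree α
  | .leaf a => .leaf a
  | .node l r => if l.mkey ≤ r.mkey then .node l.norm r.norm else .node r.norm l.norm

theorem leaves_norm : ∀ t : RTree α, t.norm.leaves = t.leaves
  | .leaf a => rfl
  | .node l r => by
      rw [norm]
      split_ifs with h
      · simp [leaves, leaves_norm l, leaves_norm r]
      · simp [leaves, leaves_norm l, leaves_norm r, add_comm]

theorem mkey_norm (t : RTree α) : t.norm.mkey = t.mkey := mkey_congr (leaves_norm t)

inductive IsNorm : RTree α → Prop
  | leaf (a : α) : IsNorm (.leaf a)
  | node {l r} : IsNorm l → IsNorm r → l.mkey ≤ r.mkey → IsNorm (.node l r)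

theorem isNorm_norm : ∀ t : RTree α, IsNorm t.norm
  | .leaf a => .leaf a
  | .node l r => by
      rw [norm]; split_ifs with h
      · exact .node (isNorm_norm l) (isNorm_norm r) (by rw [mkey_norm, mkey_norm]; exact h)
      · exact .node (isNorm_norm r) (isNorm_norm l)
          (by rw [mkey_norm, mkey_norm]; exact le_of_not_ge h)

theorem IsNorm.norm_eq : ∀ {t : RTree α}, IsNorm t → t.norm = t
  | _, .leaf a => rfl
  | _, .node hl hr hle => by rw [norm, if_pos hle, hl.norm_eq, hr.norm_eq]

theorem tequiv_norm : ∀ t : RTree α, TEquiv t t.norm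
  | .leaf a => .leaf a
  | .node l r => by
      rw [norm]; split_ifs with h
      · exact .node (tequiv_norm l) (tequiv_norm r)
      · exact .swap (tequiv_norm l) (tequiv_norm r)

theorem TEquiv.norm_eq {t t' : RTree α} (h : TEquiv t t') (hnd : t.leaves.Nodup) :
    t.norm = t'.norm := by
  induction h with
  | leaf a => rfl
  | @node l r l' r' h1 h2 ih1 ih2 =>
      rw [leaves, Multiset.nodup_add] at hnd
      obtain ⟨h1n, h2n, -⟩ := hnd
      simp only [norm]
      rw [mkey_congr h1.leaves_eq, mkey_congr h2.leaves_eq, ih1 h1n, ih2 h2n]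
  | @swap l r l' r' h1 h2 ih1 ih2 =>
      rw [leaves, Multiset.nodup_add] at hnd
      obtain ⟨h1n, h2n, hdisj⟩ := hnd
      have hkey : mkey l ≠ mkey r := fun he =>
        Multiset.disjoint_left.mp hdisj (mkey_mem l) (he ▸ mkey_mem r)
      have e1 : mkey l = mkey r' := mkey_congr h1.leaves_eq
      have e2 : mkey r = mkey l' := mkey_congr h2.leaves_eq
      simp only [norm]
      rw [← e1, ← e2, ← ih1 h1n, ← ih2 h2n]
      rcases lt_or_gt_of_ne hkey with h | h
      · rw [if_pos h.le, if_neg (not_le.mpr h)]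
      · rw [if_neg (not_le.mpr h), if_pos h.le]

theorem eqvGen_aux {t t' : RTree α} (h : Relation.EqvGen TEquiv t t') :
    t.leaves = t'.leaves ∧ (t.leaves.Nodup → t.norm = t'.norm) := by
  induction h with
  | rel a b hab => exact ⟨hab.leaves_eq, hab.norm_eq⟩
  | refl a => exact ⟨rfl, fun _ => rfl⟩
  | symm a b _ ih => exact ⟨ih.1.symm, fun hnd => (ih.2 (by rw [ih.1]; exact hnd)).symm⟩
  | trans a b c _ _ ih1 ih2 =>
      exact ⟨ih1.1.trans ih2.1, fun hnd => (ih1.2 hnd).trans (ih2.2 (ih1.1 ▸ hnd))⟩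

theorem mk_eq_iff_norm_eq {t t' : RTree α} (hnd : t.leaves.Nodup) :
    Quot.mk TEquiv t = Quot.mk TEquiv t' ↔ t.norm = t'.norm := by
  constructor
  · intro h
    exact (eqvGen_aux (Quot.eq.mp h)).2 hnd
  · intro h
    calc Quot.mk TEquiv t = Quot.mk TEquiv t.norm := Quot.sound (tequiv_norm t)
      _ = Quot.mk TEquiv t'.norm := by rw [h]
      _ = Quot.mk TEquiv t' := (Quot.sound (tequiv_norm t')).symm

end Key
end RTree
-- ===================== chunk 2 =====================
set_option linter.unusedSectionVars false
namespace RTree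
section Ins
variable {α : Type u} [LinearOrder α] {x : α}

def nv : RTree α → ℕ
  | .leaf _ => 1
  | .node l r => nv l + nv r + 1

theorem nv_pos : ∀ t : RTree α, 0 < t.nv
  | .leaf _ => one_pos
  | .node l r => by rw [nv]; omega

theorem nv_eq : ∀ t : RTree α, t.nv = 2 * Multiset.card t.leaves - 1
  | .leaf a => rfl
  | .node l r => by
      have hl := card_leaves_pos l
      have hr := card_leaves_pos r
      rw [nv, nv_eq l, nv_eq r, leaves, Multiset.card_add]
      omega

def insAll (x : α) : RTree α → List (RTree α)
  | .leaf a => [.node (.leaf a) (.leaf x)]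
  | .node l r => .node (.node l r) (.leaf x) ::
      ((insAll x l).map (fun s => .node s r) ++ (insAll x r).map (fun s => .node l s))

theorem length_insAll : ∀ t : RTree α, (insAll x t).length = t.nv
  | .leaf a => rfl
  | .node l r => by
      rw [insAll, nv, List.length_cons, List.length_append, List.length_map,
        List.length_map, length_insAll l, length_insAll r]

theorem leaves_of_mem_insAll : ∀ {t : RTree α}, ∀ u ∈ insAll x t, u.leaves = t.leaves + {x}
  | .leaf a, u, hu => by
      rw [insAll, List.mem_singleton] at hu
      subst hu; rfl
  | .node l r, u, hu => by
      rw [insAll, List.mem_cons, List.mem_append, List.mem_map, List.mem_map] at hu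
      rcases hu with rfl | ⟨s, hs, rfl⟩ | ⟨s, hs, rfl⟩
      · rfl
      · show s.leaves + r.leaves = (l.leaves + r.leaves) + {x}
        rw [leaves_of_mem_insAll s hs]
        exact add_right_comm _ _ _
      · show l.leaves + s.leaves = (l.leaves + r.leaves) + {x}
        rw [leaves_of_mem_insAll s hs, add_assoc]

theorem mkey_isNorm_of_mem_insAll :
    ∀ {t : RTree α}, IsNorm t → (∀ y ∈ t.leaves, y < x) →
      ∀ u ∈ insAll x t, u.mkey = t.mkey ∧ IsNorm u
  | .leaf a, _, hmax, u, hu => by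
      rw [insAll, List.mem_singleton] at hu
      subst hu
      have hax : a < x := hmax a (by simp [leaves])
      constructor
      · show min a x = a
        exact min_eq_left hax.le
      · exact .node (.leaf a) (.leaf x) hax.le
  | .node l r, ht, hmax, u, hu => by
      cases ht with
      | node hl hr hle =>
      have hmaxl : ∀ y ∈ l.leaves, y < x := fun y hy => hmax y (by simp [leaves, hy])
      have hmaxr : ∀ y ∈ r.leaves, y < x := fun y hy => hmax y (by simp [leaves, hy])
      rw [insAll, List.mem_cons, List.mem_append, List.mem_map, List.mem_map] at hu
      rcases hu with rfl | ⟨s, hs, rfl⟩ | ⟨s, hs, rfl⟩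
      · have hkx : (RTree.node l r).mkey < x := hmax _ (mkey_mem _)
        constructor
        · show min (RTree.node l r).mkey x = _
          exact min_eq_left hkx.le
        · exact .node (.node hl hr hle) (.leaf x) hkx.le
      · obtain ⟨hk, hn⟩ := mkey_isNorm_of_mem_insAll hl hmaxl s hs
        constructor
        · show min s.mkey r.mkey = min l.mkey r.mkey
          rw [hk]
        · exact .node hn hr (hk ▸ hle)
      · obtain ⟨hk, hn⟩ := mkey_isNorm_of_mem_insAll hr hmaxr s hs
        constructor
        · show min l.mkey s.mkey = min l.mkey r.mkey
          rw [hk]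
        · exact .node hl hn (hk ▸ hle)

theorem node_leaf_mem_insAll : ∀ t : RTree α, RTree.node t (.leaf x) ∈ insAll x t
  | .leaf a => by simp [insAll]
  | .node l r => by rw [insAll]; exact List.mem_cons_self

def isLeafB (x : α) : RTree α → Bool
  | .leaf a => decide (a = x)
  | .node _ _ => false

theorem isLeafB_iff {t : RTree α} : isLeafB x t = true ↔ t = .leaf x := by
  cases t with
  | leaf a => simp [isLeafB]
  | node l r => simp [isLeafB]

def delx (x : α) : RTree α → RTree α
  | .leaf a => .leaf a
  | .node l r =>
    if isLeafB x r then l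
    else if isLeafB x l then r
    else .node (delx x l) (delx x r)

theorem delx_of_not_mem : ∀ {t : RTree α}, x ∉ t.leaves → delx x t = t
  | .leaf a, _ => rfl
  | .node l r, h => by
      have hxl : x ∉ l.leaves := fun hx => h (by simp [leaves, hx])
      have hxr : x ∉ r.leaves := fun hx => h (by simp [leaves, hx])
      have h1 : isLeafB x r ≠ true := by
        rw [Ne, isLeafB_iff]; rintro rfl; exact hxr (by simp [leaves])
      have h2 : isLeafB x l ≠ true := by
        rw [Ne, isLeafB_iff]; rintro rfl; exact hxl (by simp [leaves])
      rw [delx, if_neg h1, if_neg h2, delx_of_not_mem hxl, delx_of_not_mem hxr]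

theorem not_isLeafB_of_mem_insAll {t : RTree α} (hx : x ∉ t.leaves)
    {u : RTree α} (hu : u ∈ insAll x t) : isLeafB x u = false := by
  have hl := leaves_of_mem_insAll u hu
  rw [Bool.eq_false_iff, Ne, isLeafB_iff]
  rintro rfl
  have := congrArg Multiset.card hl
  simp only [leaves, Multiset.card_singleton, Multiset.card_add] at this
  have := card_leaves_pos t
  omega

theorem delx_of_mem_insAll : ∀ {t : RTree α}, x ∉ t.leaves → ∀ u ∈ insAll x t, delx x u = t
  | .leaf a, hx, u, hu => by
      rw [insAll, List.mem_singleton] at hu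
      subst hu
      rw [delx, if_pos (isLeafB_iff.mpr rfl)]
  | .node l r, hx, u, hu => by
      have hxl : x ∉ l.leaves := fun h => hx (by simp [leaves, h])
      have hxr : x ∉ r.leaves := fun h => hx (by simp [leaves, h])
      have hrx : isLeafB x r ≠ true := by
        rw [Ne, isLeafB_iff]; rintro rfl; exact hxr (by simp [leaves])
      have hlx : isLeafB x l ≠ true := by
        rw [Ne, isLeafB_iff]; rintro rfl; exact hxl (by simp [leaves])
      rw [insAll, List.mem_cons, List.mem_append, List.mem_map, List.mem_map] at hu
      rcases hu with rfl | ⟨s, hs, rfl⟩ | ⟨s, hs, rfl⟩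
      · rw [delx, if_pos (isLeafB_iff.mpr rfl)]
      · rw [delx, if_neg hrx,
          if_neg (by rw [not_isLeafB_of_mem_insAll hxl hs]; simp),
          delx_of_mem_insAll hxl s hs, delx_of_not_mem hxr]
      · rw [delx, if_neg (by rw [not_isLeafB_of_mem_insAll hxr hs]; simp),
          if_neg hlx, delx_of_mem_insAll hxr s hs, delx_of_not_mem hxl]

theorem leaves_delx : ∀ {t : RTree α}, t.leaves.Nodup → t ≠ .leaf x →
    (delx x t).leaves = t.leaves.erase x
  | .leaf a, _, hne => by
      have hax : a ≠ x := fun h => hne (by rw [h])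
      rw [delx, leaves, Multiset.erase_of_notMem (by simpa using Ne.symm hax)]
  | .node l r, hnd, _ => by
      rw [leaves, Multiset.nodup_add] at hnd
      obtain ⟨hndl, hndr, hdisj⟩ := hnd
      by_cases hr : isLeafB x r
      · rw [delx, if_pos hr]
        rw [isLeafB_iff] at hr
        subst hr
        have hxl : x ∉ l.leaves := fun h =>
          Multiset.disjoint_left.mp hdisj h (by simp [leaves])
        simp only [leaves]
        rw [Multiset.erase_add_right_pos _ (by simp)]
        simp
      · by_cases hl : isLeafB x l
        · rw [delx, if_neg hr, if_pos hl]
          rw [isLeafB_iff] at hl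
          subst hl
          simp only [leaves]
          rw [Multiset.erase_add_left_pos _ (by simp)]
          simp
        · rw [delx, if_neg hr, if_neg hl]
          have hlne : l ≠ .leaf x := fun h => hl (isLeafB_iff.mpr h)
          have hrne : r ≠ .leaf x := fun h => hr (isLeafB_iff.mpr h)
          by_cases hxl : x ∈ l.leaves
          · have hxr : x ∉ r.leaves := fun h => Multiset.disjoint_left.mp hdisj hxl h
            simp only [leaves]
            rw [delx_of_not_mem hxr, leaves_delx hndl hlne,
              Multiset.erase_add_left_pos _ hxl]
          · by_cases hxr : x ∈ r.leaves
            · simp only [leaves]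
              rw [delx_of_not_mem hxl, leaves_delx hndr hrne,
                Multiset.erase_add_right_pos _ hxr]
            · rw [delx_of_not_mem hxl, delx_of_not_mem hxr,
                Multiset.erase_of_notMem
                  (by simp only [leaves, Multiset.mem_add]; tauto)]

theorem mkey_delx {t : RTree α} (hnd : t.leaves.Nodup) (hmax : ∀ y ∈ t.leaves, y ≤ x)
    (hcard : 2 ≤ Multiset.card t.leaves) : (delx x t).mkey = t.mkey := by
  by_cases hx : x ∈ t.leaves
  · have hne : t ≠ .leaf x := by
      rintro rfl; simp [leaves] at hcard
    have hl := leaves_delx (x := x) hnd hne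
    have hcard' : 0 < Multiset.card (t.leaves.erase x) := by
      rw [Multiset.card_erase_of_mem hx, Nat.pred_eq_sub_one]; omega
    obtain ⟨y, hy⟩ := Multiset.card_pos_iff_exists_mem.mp hcard'
    have hyx : y ≠ x := ((hnd.mem_erase_iff).mp hy).1
    have hyt : y ∈ t.leaves := Multiset.mem_of_mem_erase hy
    have hmk : t.mkey ≠ x := fun h =>
      absurd (lt_of_le_of_lt (h ▸ mkey_le t y hyt) (lt_of_le_of_ne (hmax y hyt) hyx))
        (lt_irrefl x)
    apply le_antisymm
    · exact mkey_le _ _ (by rw [hl]; exact hnd.mem_erase_iff.mpr ⟨hmk, mkey_mem t⟩)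
    · exact mkey_le t _ (Multiset.mem_of_mem_erase (hl ▸ mkey_mem (delx x t)))
  · rw [delx_of_not_mem hx]

theorem isNorm_delx : ∀ {t : RTree α}, IsNorm t → t.leaves.Nodup →
    (∀ y ∈ t.leaves, y ≤ x) → IsNorm (delx x t)
  | .leaf a, _, _, _ => by rw [delx]; exact .leaf a
  | .node l r, ht, hnd, hmax => by
      cases ht with
      | node hl hr hle =>
      rw [leaves, Multiset.nodup_add] at hnd
      obtain ⟨hndl, hndr, hdisj⟩ := hnd
      have hmaxl : ∀ y ∈ l.leaves, y ≤ x := fun y hy => hmax y (by simp [leaves, hy])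
      have hmaxr : ∀ y ∈ r.leaves, y ≤ x := fun y hy => hmax y (by simp [leaves, hy])
      by_cases h1 : isLeafB x r
      · rw [delx, if_pos h1]; exact hl
      · by_cases h2 : isLeafB x l
        · rw [delx, if_neg h1, if_pos h2]; exact hr
        · rw [delx, if_neg h1, if_neg h2]
          have keyl : (delx x l).mkey = l.mkey := by
            by_cases hxl : x ∈ l.leaves
            · cases l with
              | leaf c =>
                  exfalso
                  apply h2
                  rw [isLeafB_iff]
                  simp [leaves] at hxl
                  rw [hxl]
              | node a b =>
                  apply mkey_delx hndl hmaxl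
                  have := card_leaves_pos a
                  have := card_leaves_pos b
                  rw [leaves, Multiset.card_add]
                  omega
            · rw [delx_of_not_mem hxl]
          have keyr : (delx x r).mkey = r.mkey := by
            by_cases hxr : x ∈ r.leaves
            · cases r with
              | leaf c =>
                  exfalso
                  apply h1
                  rw [isLeafB_iff]
                  simp [leaves] at hxr
                  rw [hxr]
              | node a b =>
                  apply mkey_delx hndr hmaxr
                  have := card_leaves_pos a
                  have := card_leaves_pos b
                  rw [leaves, Multiset.card_add]
                  omega
            · rw [delx_of_not_mem hxr]
          exact .node (isNorm_delx hl hndl hmaxl) (isNorm_delx hr hndr hmaxr)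
            (by rw [keyl, keyr]; exact hle)

theorem mem_insAll_delx : ∀ t : RTree α, (∃ l r, t = .node l r) → IsNorm t →
    x ∈ t.leaves → (∀ y ∈ t.leaves, y ≤ x) → t.leaves.Nodup →
    t ∈ insAll x (delx x t) := by
  intro t
  induction t with
  | leaf a => rintro ⟨l, r, h⟩; exact absurd h (by simp)
  | node l r ihl ihr =>
      rintro - ht hx hmax hnd
      cases ht with
      | node hl hr hle =>
      rw [leaves, Multiset.nodup_add] at hnd
      obtain ⟨hndl, hndr, hdisj⟩ := hnd
      have hmaxl : ∀ y ∈ l.leaves, y ≤ x := fun y hy => hmax y (by simp [leaves, hy])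
      have hmaxr : ∀ y ∈ r.leaves, y ≤ x := fun y hy => hmax y (by simp [leaves, hy])
      by_cases h1 : isLeafB x r
      · rw [delx, if_pos h1]
        rw [isLeafB_iff] at h1
        subst h1
        exact node_leaf_mem_insAll l
      · by_cases h2 : isLeafB x l
        · exfalso
          rw [isLeafB_iff] at h2
          subst h2
          have hxr : x ∉ r.leaves := fun h =>
            Multiset.disjoint_left.mp hdisj (by simp [leaves]) h
          have h3 : r.mkey < x :=
            lt_of_le_of_ne (hmaxr _ (mkey_mem r)) (fun h => hxr (h ▸ mkey_mem r))
          have h4 : x ≤ r.mkey := by simpa [mkey] using hle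
          exact absurd h4 (not_le.mpr h3)
        · rw [delx, if_neg h1, if_neg h2]
          rw [leaves, Multiset.mem_add] at hx
          rcases hx with hxl | hxr
          · have hxr : x ∉ r.leaves := fun h => Multiset.disjoint_left.mp hdisj hxl h
            rw [delx_of_not_mem hxr]
            have hmem : l ∈ insAll x (delx x l) := by
              apply ihl _ hl hxl hmaxl hndl
              cases l with
              | leaf c =>
                  exfalso; apply h2; rw [isLeafB_iff]
                  simp [leaves] at hxl
                  rw [hxl]
              | node a b => exact ⟨a, b, rfl⟩
            rw [insAll]
            exact List.mem_cons_of_mem _ (List.mem_append_left _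
              (List.mem_map.mpr ⟨l, hmem, rfl⟩))
          · have hxl : x ∉ l.leaves := fun h => Multiset.disjoint_left.mp hdisj h hxr
            rw [delx_of_not_mem hxl]
            have hmem : r ∈ insAll x (delx x r) := by
              apply ihr _ hr hxr hmaxr hndr
              cases r with
              | leaf c =>
                  exfalso; apply h1; rw [isLeafB_iff]
                  simp [leaves] at hxr
                  rw [hxr]
              | node a b => exact ⟨a, b, rfl⟩
            rw [insAll]
            exact List.mem_cons_of_mem _ (List.mem_append_right _
              (List.mem_map.mpr ⟨r, hmem, rfl⟩))

theorem nodup_insAll : ∀ {t : RTree α}, x ∉ t.leaves → (insAll x t).Nodup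
  | .leaf a, _ => by simp [insAll]
  | .node l r, hx => by
      have hxl : x ∉ l.leaves := fun h => hx (by simp [leaves, h])
      have hxr : x ∉ r.leaves := fun h => hx (by simp [leaves, h])
      rw [insAll]
      refine List.Nodup.cons ?_ ?_
      · intro hmem
        rw [List.mem_append, List.mem_map, List.mem_map] at hmem
        rcases hmem with ⟨s, hs, heq⟩ | ⟨s, hs, heq⟩
        · -- node s r = node (node l r) (leaf x) : then r = leaf x, contradiction
          injection heq with e1 e2
          exact hxr (by rw [e2]; simp [leaves])
        · -- node l s = node (node l r) (leaf x) : then l = node l r, size contradiction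
          injection heq with e1 e2
          have := congrArg nv e1
          rw [nv] at this
          have := nv_pos r
          omega
      · rw [List.nodup_append]
        refine ⟨?_, ?_, ?_⟩
        · exact (nodup_insAll hxl).map fun s₁ s₂ h => by injection h
        · exact (nodup_insAll hxr).map fun s₁ s₂ h => by injection h
        · rintro u hu1 _ hu2 rfl
          rw [List.mem_map] at hu1 hu2
          obtain ⟨s₁, hs₁, rfl⟩ := hu1
          obtain ⟨s₂, hs₂, heq⟩ := hu2
          injection heq with e1 e2
          -- e1 : s₁ = l, but x ∈ s₁.leaves while x ∉ l.leaves
          have hle := leaves_of_mem_insAll s₁ hs₁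
          rw [← e1] at hle
          have := congrArg Multiset.card hle
          simp only [Multiset.card_add, Multiset.card_singleton] at this
          omega

end Ins
end RTree
-- ===================== chunk 3 =====================
namespace RTree
section Count
variable {α : Type u} [LinearOrder α]

/-- double factorial style product -/
def dfac (m : ℕ) : ℕ := ∏ j ∈ Finset.range (m - 1), (2 * j + 1)

def allTrees : List α → List (RTree α)
  | [] => []
  | [a] => [.leaf a]
  | x :: y :: ys => (allTrees (y :: ys)).flatMap (insAll x)

theorem mem_allTrees : ∀ l : List α, l.Pairwise (· > ·) →
    ∀ t : RTree α, t ∈ allTrees l ↔ (IsNorm t ∧ t.leaves = ↑l)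
  | [], _, t => by
      simp only [allTrees, List.not_mem_nil, false_iff, not_and]
      intro _ h
      have := card_leaves_pos t
      rw [h] at this
      simp at this
  | [a], _, t => by
      simp only [allTrees, List.mem_singleton]
      constructor
      · rintro rfl; exact ⟨.leaf a, rfl⟩
      · rintro ⟨-, h⟩
        exact leaves_eq_singleton (by rw [h]; rfl)
  | x :: y :: ys, hp, t => by
      have hp' : (y :: ys).Pairwise (· > ·) := hp.of_cons
      have hgt : ∀ z ∈ (y :: ys), z < x := fun z hz => List.rel_of_pairwise_cons hp hz
      have hnd : (x :: y :: ys).Nodup := hp.nodup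
      rw [allTrees, List.mem_flatMap]
      constructor
      · rintro ⟨s, hs, hts⟩
        obtain ⟨hn, hl⟩ := (mem_allTrees (y :: ys) hp' s).mp hs
        have hmax : ∀ z ∈ s.leaves, z < x := fun z hz => hgt z (by
          rw [hl] at hz; exact_mod_cast hz)
        obtain ⟨-, hnt⟩ := mkey_isNorm_of_mem_insAll hn hmax t hts
        refine ⟨hnt, ?_⟩
        rw [leaves_of_mem_insAll t hts, hl, add_comm, Multiset.singleton_add,
          Multiset.cons_coe]
      · rintro ⟨hn, hl⟩
        have hndt : t.leaves.Nodup := by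
          rw [hl, Multiset.coe_nodup]; exact hnd
        have hx : x ∈ t.leaves := by rw [hl]; exact List.mem_cons_self
        have hmax : ∀ z ∈ t.leaves, z ≤ x := by
          intro z hz
          rw [hl] at hz
          rcases List.mem_cons.mp hz with rfl | hz'
          · exact le_refl z
          · exact (hgt z hz').le
        have hnode : ∃ a b, t = .node a b := by
          cases t with
          | leaf c =>
              exfalso
              have := congrArg Multiset.card hl
              simp [leaves] at this
          | node a b => exact ⟨a, b, rfl⟩
        have hne : t ≠ .leaf x := by
          obtain ⟨a, b, rfl⟩ := hnode; simp
        refine ⟨delx x t, ?_, mem_insAll_delx t hnode hn hx hmax hndt⟩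
        rw [mem_allTrees (y :: ys) hp']
        refine ⟨isNorm_delx hn hndt hmax, ?_⟩
        rw [leaves_delx hndt hne, hl, ← Multiset.cons_coe, Multiset.erase_cons_head]

theorem x_not_mem_of_pairwise {x y : α} {ys : List α}
    (hp : (x :: y :: ys).Pairwise (· > ·)) {s : RTree α}
    (hs : s ∈ allTrees (y :: ys)) : x ∉ s.leaves := by
  obtain ⟨-, hl⟩ := (mem_allTrees (y :: ys) hp.of_cons s).mp hs
  rw [hl]
  intro hx
  have hx' : x ∈ y :: ys := by exact_mod_cast hx
  exact absurd (List.rel_of_pairwise_cons hp hx') (lt_irrefl x)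

theorem nodup_allTrees : ∀ l : List α, l.Pairwise (· > ·) → (allTrees l).Nodup
  | [], _ => List.nodup_nil
  | [a], _ => List.nodup_singleton _
  | x :: y :: ys, hp => by
      rw [allTrees, List.nodup_flatMap]
      constructor
      · intro s hs
        exact nodup_insAll (x_not_mem_of_pairwise hp hs)
      · have hnd := nodup_allTrees (y :: ys) hp.of_cons
        refine hnd.imp_of_mem ?_
        intro s s' hs hs' hne u hu hu'
        exact hne ((delx_of_mem_insAll (x_not_mem_of_pairwise hp hs) u hu).symm.trans
          (delx_of_mem_insAll (x_not_mem_of_pairwise hp hs') u hu'))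

theorem length_allTrees : ∀ l : List α, l.Pairwise (· > ·) → l ≠ [] →
    (allTrees l).length = dfac l.length
  | [], _, h => absurd rfl h
  | [a], _, _ => by simp [allTrees, dfac]
  | x :: y :: ys, hp, _ => by
      rw [allTrees, List.length_flatMap]
      have hc : ∀ s ∈ allTrees (y :: ys), (List.length ∘ insAll x) s = 2 * ys.length + 1 := by
        intro s hs
        obtain ⟨-, hl⟩ := (mem_allTrees (y :: ys) hp.of_cons s).mp hs
        have hcard : Multiset.card s.leaves = ys.length + 1 := by
          rw [hl]; simp
        show (insAll x s).length = 2 * ys.length + 1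
        rw [length_insAll, nv_eq, hcard]
        omega
      rw [List.map_congr_left (f := fun a => (insAll x a).length) hc]
      have : (fun _ : RTree α => 2 * ys.length + 1) = Function.const (RTree α) (2 * ys.length + 1) := rfl
      rw [this, List.map_const, List.sum_replicate, smul_eq_mul,
        length_allTrees (y :: ys) hp.of_cons (by simp)]
      show dfac (ys.length + 1) * (2 * ys.length + 1) = dfac (ys.length + 1 + 1)
      rw [dfac, dfac]
      simp only [Nat.add_sub_cancel]
      rw [Finset.prod_range_succ]

theorem count_norm (A : Finset α) (hA : A.Nonempty) :
    {t : RTree α | IsNorm t ∧ t.leaves = A.val}.ncard = dfac A.card := by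
  set l : List α := (A.sort (· ≤ ·)).reverse with hl
  have hp : l.Pairwise (· > ·) := by
    rw [hl, List.pairwise_reverse]
    exact A.sortedLT_sort.pairwise
  have hcoe : (↑l : Multiset α) = A.val := by
    rw [hl, Multiset.coe_reverse, Finset.sort_eq]
  have hlen : l.length = A.card := by
    rw [hl, List.length_reverse, Finset.length_sort]
  have hne : l ≠ [] := by
    intro h
    have : A.card = 0 := by rw [← hlen, h]; rfl
    rw [Finset.card_eq_zero] at this
    exact hA.ne_empty this
  have hset : {t : RTree α | IsNorm t ∧ t.leaves = A.val}
      = ↑(⟨(↑(allTrees l) : Multiset (RTree α)),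
          Multiset.coe_nodup.mpr (nodup_allTrees l hp)⟩ : Finset (RTree α)) := by
    ext t
    simp only [Set.mem_setOf_eq, Finset.mem_coe, Finset.mem_mk, Multiset.mem_coe]
    rw [mem_allTrees l hp t, hcoe]
  rw [hset, Set.ncard_coe_finset, Finset.card_mk, Multiset.coe_card,
    length_allTrees l hp hne, hlen]

end Count
end RTree
-- ===================== chunk 4 =====================
namespace RTree
section Cherry
variable {α : Type u} [LinearOrder α] {a b : α}

inductive Cherried (a b : α) : RTree α → Prop
  | base : Cherried a b (.node (.leaf a) (.leaf b))
  | left {l r} : Cherried a b l → Cherried a b (.node l r)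
  | right {l r} : Cherried a b r → Cherried a b (.node l r)

theorem Cherried.mem_a {t : RTree α} (h : Cherried a b t) : a ∈ t.leaves := by
  induction h with
  | base => simp [leaves]
  | left _ ih => simp [leaves, ih]
  | right _ ih => simp [leaves, ih]

theorem Cherried.mem_b {t : RTree α} (h : Cherried a b t) : b ∈ t.leaves := by
  induction h with
  | base => simp [leaves]
  | left _ ih => simp [leaves, ih]
  | right _ ih => simp [leaves, ih]

theorem Cherried.is_node {t : RTree α} (h : Cherried a b t) : ∃ l r, t = .node l r := by
  cases h with
  | base => exact ⟨_, _, rfl⟩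
  | left _ => exact ⟨_, _, rfl⟩
  | right _ => exact ⟨_, _, rfl⟩

def expa (a b : α) : RTree α → RTree α
  | .leaf c => if c = a then .node (.leaf a) (.leaf b) else .leaf c
  | .node l r => .node (expa a b l) (expa a b r)

def contr (a b : α) : RTree α → RTree α
  | .leaf c => .leaf c
  | .node l r =>
      if isLeafB a l && isLeafB b r then .leaf a
      else .node (contr a b l) (contr a b r)

theorem leaves_expa : ∀ t : RTree α,
    (expa a b t).leaves = t.leaves + Multiset.replicate (t.leaves.count a) b
  | .leaf c => by
      by_cases h : c = a
      · subst h
        rw [expa, if_pos rfl]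
        simp [leaves]
      · rw [expa, if_neg h, leaves, Multiset.count_singleton, if_neg (fun hh => h hh.symm)]
        simp
  | .node l r => by
      rw [expa]
      show (expa a b l).leaves + (expa a b r).leaves
          = l.leaves + r.leaves + Multiset.replicate ((l.leaves + r.leaves).count a) b
      rw [leaves_expa l, leaves_expa r, Multiset.count_add, Multiset.replicate_add]
      abel

theorem mkey_expa (hab : a ≤ b) : ∀ t : RTree α, (expa a b t).mkey = t.mkey
  | .leaf c => by
      by_cases h : c = a
      · rw [expa, if_pos h]
        show min a b = c
        rw [h]
        exact min_eq_left hab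
      · rw [expa, if_neg h]
  | .node l r => by
      rw [expa]
      show min (expa a b l).mkey (expa a b r).mkey = min l.mkey r.mkey
      rw [mkey_expa hab l, mkey_expa hab r]

theorem isNorm_expa (hab : a ≤ b) : ∀ {t : RTree α}, IsNorm t → IsNorm (expa a b t)
  | .leaf c, _ => by
      by_cases h : c = a
      · rw [expa, if_pos h]
        exact .node (.leaf a) (.leaf b) hab
      · rw [expa, if_neg h]
        exact .leaf c
  | .node l r, h => by
      cases h with
      | node hl hr hle =>
      rw [expa]
      exact .node (isNorm_expa hab hl) (isNorm_expa hab hr)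
        (by rw [mkey_expa hab, mkey_expa hab]; exact hle)

theorem cherried_expa : ∀ {t : RTree α}, a ∈ t.leaves → Cherried a b (expa a b t)
  | .leaf c, h => by
      have hca : c = a := by simpa [leaves, eq_comm] using h
      rw [expa, if_pos hca]
      exact .base
  | .node l r, h => by
      rw [expa]
      rw [leaves, Multiset.mem_add] at h
      rcases h with h | h
      · exact .left (cherried_expa h)
      · exact .right (cherried_expa h)

theorem expa_not_mem : ∀ {t : RTree α}, a ∉ t.leaves → expa a b t = t
  | .leaf c, h => by
      rw [expa, if_neg (by rintro rfl; exact h (by simp [leaves]))]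
  | .node l r, h => by
      rw [expa, expa_not_mem (fun hh => h (by simp [leaves, hh])),
        expa_not_mem (fun hh => h (by simp [leaves, hh]))]

theorem expa_ne_leaf_a : ∀ s : RTree α, expa a b s ≠ .leaf a
  | .leaf c => by
      by_cases h : c = a
      · rw [expa, if_pos h]; simp
      · rw [expa, if_neg h]; simp [h]
  | .node l r => by rw [expa]; simp

theorem expa_inj : ∀ s t : RTree α, expa a b s = expa a b t → s = t
  | .leaf c, .leaf d, h => by
      by_cases hc : c = a <;> by_cases hd : d = a
      · rw [hc, hd]
      · rw [expa, expa, if_pos hc, if_neg hd] at h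
        exact absurd h (by simp)
      · rw [expa, expa, if_neg hc, if_pos hd] at h
        exact absurd h (by simp)
      · rw [expa, expa, if_neg hc, if_neg hd] at h
        exact h
  | .leaf c, .node l r, h => by
      by_cases hc : c = a
      · rw [expa, expa, if_pos hc] at h
        injection h with h1 h2
        exact absurd h1.symm (expa_ne_leaf_a l)
      · rw [expa, expa, if_neg hc] at h
        exact absurd h (by simp)
  | .node l r, .leaf c, h => by
      by_cases hc : c = a
      · rw [expa, expa, if_pos hc] at h
        injection h with h1 h2
        exact absurd h1 (expa_ne_leaf_a l)
      · rw [expa, expa, if_neg hc] at h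
        exact absurd h (by simp)
  | .node l r, .node l' r', h => by
      rw [expa, expa] at h
      injection h with h1 h2
      rw [expa_inj l l' h1, expa_inj r r' h2]

theorem contr_not_mem : ∀ {t : RTree α}, b ∉ t.leaves → contr a b t = t
  | .leaf c, _ => rfl
  | .node l r, h => by
      have hbr : b ∉ r.leaves := fun hh => h (by simp [leaves, hh])
      have hbl : b ∉ l.leaves := fun hh => h (by simp [leaves, hh])
      have hcond : ¬(isLeafB a l && isLeafB b r : Bool) := by
        simp only [Bool.and_eq_true, not_and]
        intro _ hr
        rw [isLeafB_iff] at hr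
        exact absurd (by rw [hr]; simp [leaves] : b ∈ r.leaves) hbr
      rw [contr, if_neg hcond, contr_not_mem hbl, contr_not_mem hbr]

theorem Cherried.expa_contr (hab : a ≠ b) {t : RTree α} (hC : Cherried a b t)
    (hnd : t.leaves.Nodup) : expa a b (contr a b t) = t := by
  induction hC with
  | base =>
      rw [contr, if_pos (by rw [Bool.and_eq_true, isLeafB_iff, isLeafB_iff]; exact ⟨rfl, rfl⟩),
        expa, if_pos rfl]
  | @left l r hC ih =>
      rw [leaves, Multiset.nodup_add] at hnd
      obtain ⟨hndl, hndr, hdisj⟩ := hnd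
      have hbl : b ∈ l.leaves := hC.mem_b
      have hal : a ∈ l.leaves := hC.mem_a
      have hbr : b ∉ r.leaves := fun hh => Multiset.disjoint_left.mp hdisj hbl hh
      have har : a ∉ r.leaves := fun hh => Multiset.disjoint_left.mp hdisj hal hh
      have hcond : ¬(isLeafB a l && isLeafB b r : Bool) := by
        simp only [Bool.and_eq_true, not_and]
        intro hla
        rw [isLeafB_iff] at hla
        exfalso
        rw [hla] at hbl
        simp [leaves] at hbl
        exact hab hbl.symm
      rw [contr, if_neg hcond, contr_not_mem hbr, expa, ih hndl, expa_not_mem har]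
  | @right l r hC ih =>
      rw [leaves, Multiset.nodup_add] at hnd
      obtain ⟨hndl, hndr, hdisj⟩ := hnd
      have hbr : b ∈ r.leaves := hC.mem_b
      have har : a ∈ r.leaves := hC.mem_a
      have hbl : b ∉ l.leaves := fun hh => Multiset.disjoint_left.mp hdisj hh hbr
      have hal : a ∉ l.leaves := fun hh => Multiset.disjoint_left.mp hdisj hh har
      have hcond : ¬(isLeafB a l && isLeafB b r : Bool) := by
        simp only [Bool.and_eq_true, not_and]
        intro _ hrb
        rw [isLeafB_iff] at hrb
        obtain ⟨u, v, huv⟩ := hC.is_node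
        rw [hrb] at huv
        exact absurd huv (by simp)
      rw [contr, if_neg hcond, contr_not_mem hbl, expa, ih hndr, expa_not_mem hal]

theorem leaves_contr (hab : a ≠ b) {t : RTree α} (hC : Cherried a b t)
    (hnd : t.leaves.Nodup) : (contr a b t).leaves = t.leaves.erase b := by
  induction hC with
  | base =>
      rw [contr, if_pos (by rw [Bool.and_eq_true, isLeafB_iff, isLeafB_iff]; exact ⟨rfl, rfl⟩)]
      show ({a} : Multiset α) = (leaves (RTree.leaf a) + leaves (RTree.leaf b)).erase b
      rw [leaves, leaves, Multiset.erase_add_right_pos _ (by simp)]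
      simp
  | @left l r hC ih =>
      rw [leaves, Multiset.nodup_add] at hnd
      obtain ⟨hndl, hndr, hdisj⟩ := hnd
      have hbl : b ∈ l.leaves := hC.mem_b
      have hbr : b ∉ r.leaves := fun hh => Multiset.disjoint_left.mp hdisj hbl hh
      have hcond : ¬(isLeafB a l && isLeafB b r : Bool) := by
        simp only [Bool.and_eq_true, not_and]
        intro hla
        rw [isLeafB_iff] at hla
        exfalso
        rw [hla] at hbl
        simp [leaves] at hbl
        exact hab hbl.symm
      rw [contr, if_neg hcond, contr_not_mem hbr]
      show (contr a b l).leaves + r.leaves = (l.leaves + r.leaves).erase b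
      rw [ih hndl, Multiset.erase_add_left_pos _ hbl]
  | @right l r hC ih =>
      rw [leaves, Multiset.nodup_add] at hnd
      obtain ⟨hndl, hndr, hdisj⟩ := hnd
      have hbr : b ∈ r.leaves := hC.mem_b
      have hbl : b ∉ l.leaves := fun hh => Multiset.disjoint_left.mp hdisj hh hbr
      have hcond : ¬(isLeafB a l && isLeafB b r : Bool) := by
        simp only [Bool.and_eq_true, not_and]
        intro _ hrb
        rw [isLeafB_iff] at hrb
        obtain ⟨u, v, huv⟩ := hC.is_node
        rw [hrb] at huv
        exact absurd huv (by simp)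
      rw [contr, if_neg hcond, contr_not_mem hbl]
      show l.leaves + (contr a b r).leaves = (l.leaves + r.leaves).erase b
      rw [ih hndr, Multiset.erase_add_right_pos _ hbr]

theorem mkey_contr (hab : a ≤ b) : ∀ t : RTree α, (contr a b t).mkey = t.mkey
  | .leaf c => rfl
  | .node l r => by
      by_cases hcond : (isLeafB a l && isLeafB b r : Bool)
      · rw [contr, if_pos hcond]
        rw [Bool.and_eq_true, isLeafB_iff, isLeafB_iff] at hcond
        obtain ⟨rfl, rfl⟩ := hcond
        show a = min (mkey (RTree.leaf a)) (mkey (RTree.leaf b))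
        show a = min a b
        exact (min_eq_left hab).symm
      · rw [contr, if_neg hcond]
        show min (contr a b l).mkey (contr a b r).mkey = min l.mkey r.mkey
        rw [mkey_contr hab l, mkey_contr hab r]

theorem isNorm_contr (hab : a ≤ b) : ∀ {t : RTree α}, IsNorm t → IsNorm (contr a b t)
  | .leaf c, _ => .leaf c
  | .node l r, h => by
      cases h with
      | node hl hr hle =>
      by_cases hcond : (isLeafB a l && isLeafB b r : Bool)
      · rw [contr, if_pos hcond]; exact .leaf a
      · rw [contr, if_neg hcond]
        exact .node (isNorm_contr hab hl) (isNorm_contr hab hr)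
          (by rw [mkey_contr hab, mkey_contr hab]; exact hle)

theorem tequiv_relabel_of_cherried (hC : Cherried a b t)
    (hnd : t.leaves.Nodup) : TEquiv (t.relabel (Equiv.swap a b)) t := by
  induction hC with
  | base =>
      show TEquiv (RTree.node (.leaf (Equiv.swap a b a)) (.leaf (Equiv.swap a b b))) _
      rw [Equiv.swap_apply_left, Equiv.swap_apply_right]
      exact .swap (.leaf b) (.leaf a)
  | @left l r hC ih =>
      rw [leaves, Multiset.nodup_add] at hnd
      obtain ⟨hndl, hndr, hdisj⟩ := hnd
      have hfix : r.relabel (Equiv.swap a b) = r := by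
        apply relabel_id_on
        intro y hy
        apply Equiv.swap_apply_of_ne_of_ne
        · rintro rfl; exact Multiset.disjoint_left.mp hdisj hC.mem_a hy
        · rintro rfl; exact Multiset.disjoint_left.mp hdisj hC.mem_b hy
      show TEquiv (RTree.node (l.relabel _) (r.relabel _)) _
      rw [hfix]
      exact .node (ih hndl) (tequiv_refl r)
  | @right l r hC ih =>
      rw [leaves, Multiset.nodup_add] at hnd
      obtain ⟨hndl, hndr, hdisj⟩ := hnd
      have hfix : l.relabel (Equiv.swap a b) = l := by
        apply relabel_id_on
        intro y hy
        apply Equiv.swap_apply_of_ne_of_ne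
        · rintro rfl; exact Multiset.disjoint_left.mp hdisj hy hC.mem_a
        · rintro rfl; exact Multiset.disjoint_left.mp hdisj hy hC.mem_b
      show TEquiv (RTree.node (l.relabel _) (r.relabel _)) _
      rw [hfix]
      exact .node (tequiv_refl l) (ih hndr)

theorem map_swap_self {s : Multiset α} (hnd : s.Nodup) (ha : a ∈ s) (hb : b ∈ s) :
    s.map (Equiv.swap a b) = s := by
  rw [Multiset.Nodup.ext (hnd.map (Equiv.swap a b).injective) hnd]
  intro x
  rw [Multiset.mem_map]
  constructor
  · rintro ⟨y, hy, rfl⟩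
    by_cases hya : y = a
    · subst hya; rw [Equiv.swap_apply_left]; exact hb
    · by_cases hyb : y = b
      · subst hyb; rw [Equiv.swap_apply_right]; exact ha
      · rw [Equiv.swap_apply_of_ne_of_ne hya hyb]; exact hy
  · intro hx
    refine ⟨Equiv.swap a b x, ?_, ?_⟩
    · by_cases hxa : x = a
      · subst hxa; rw [Equiv.swap_apply_left]; exact hb
      · by_cases hxb : x = b
        · subst hxb; rw [Equiv.swap_apply_right]; exact ha
        · rw [Equiv.swap_apply_of_ne_of_ne hxa hxb]; exact hx
    · exact Equiv.swap_apply_self a b x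

theorem cherried_of_fixed (hab : a < b) :
    ∀ {t : RTree α}, IsNorm t → t.leaves.Nodup → a ∈ t.leaves → b ∈ t.leaves →
      (t.relabel (Equiv.swap a b)).norm = t → Cherried a b t
  | .leaf c, _, _, ha, hb, _ => by
      exfalso
      simp [leaves] at ha hb
      exact absurd (ha.trans hb.symm) hab.ne
  | .node l r, hN, hnd, ha, hb, hfix => by
      cases hN with
      | node hl hr hle =>
      rw [leaves, Multiset.nodup_add] at hnd
      obtain ⟨hndl, hndr, hdisj⟩ := hnd
      rw [leaves, Multiset.mem_add] at ha hb
      have hrel : (RTree.node l r).relabel (Equiv.swap a b)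
          = .node (l.relabel (Equiv.swap a b)) (r.relabel (Equiv.swap a b)) := rfl
      rcases ha with hal | har <;> rcases hb with hbl | hbr
      · -- a, b ∈ l
        have hfixr : r.relabel (Equiv.swap a b) = r := by
          apply relabel_id_on
          intro y hy
          apply Equiv.swap_apply_of_ne_of_ne
          · rintro rfl; exact Multiset.disjoint_left.mp hdisj hal hy
          · rintro rfl; exact Multiset.disjoint_left.mp hdisj hbl hy
        rw [hrel, hfixr] at hfix
        have hlv : (l.relabel (Equiv.swap a b)).leaves = l.leaves := by
          rw [leaves_relabel, map_swap_self hndl hal hbl]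
        rw [norm, mkey_congr hlv, if_pos hle, hr.norm_eq] at hfix
        injection hfix with h1 h2
        exact .left (cherried_of_fixed hab hl hndl hal hbl h1)
      · -- a ∈ l, b ∈ r
        rw [hrel] at hfix
        have hbl : b ∉ l.leaves := fun hh => Multiset.disjoint_left.mp hdisj hh hbr
        have har : a ∉ r.leaves := fun hh => Multiset.disjoint_left.mp hdisj hal hh
        rw [norm] at hfix
        split_ifs at hfix with hcond
        · exfalso
          injection hfix with h1 h2
          have hlv : l.leaves = (l.relabel (Equiv.swap a b)).leaves := by
            conv_lhs => rw [← h1]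
            rw [leaves_norm]
          rw [leaves_relabel] at hlv
          have hcnt := congrArg (Multiset.count a) hlv
          have : Multiset.count a (Multiset.map (⇑(Equiv.swap a b)) l.leaves)
              = Multiset.count b l.leaves := by
            have := Multiset.count_map_eq_count' (⇑(Equiv.swap a b)) l.leaves
              (Equiv.swap a b).injective b
            rwa [Equiv.swap_apply_right] at this
          rw [this, Multiset.count_eq_zero_of_notMem hbl] at hcnt
          rw [← Multiset.count_pos] at hal
          omega
        · injection hfix with h1 h2
          -- h1 : (r.relabel σ).norm = l, h2 : (l.relabel σ).norm = r
          have hlv1 : Multiset.map (⇑(Equiv.swap a b)) r.leaves = l.leaves := by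
            rw [← leaves_relabel, ← leaves_norm (r.relabel (Equiv.swap a b)), h1]
          have hlv2 : Multiset.map (⇑(Equiv.swap a b)) l.leaves = r.leaves := by
            rw [← leaves_relabel, ← leaves_norm (l.relabel (Equiv.swap a b)), h2]
          have hleql : l.leaves = {a} := by
            rw [Multiset.Nodup.ext hndl (Multiset.nodup_singleton a)]
            intro y
            simp only [Multiset.mem_singleton]
            constructor
            · intro hy
              by_contra hya
              have hyb : y ≠ b := fun hh => hbl (hh ▸ hy)
              have : (Equiv.swap a b) y ∈ r.leaves := by
                rw [← hlv2]; exact Multiset.mem_map_of_mem _ hy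
              rw [Equiv.swap_apply_of_ne_of_ne hya hyb] at this
              exact Multiset.disjoint_left.mp hdisj hy this
            · rintro rfl; exact hal
          have hleqr : r.leaves = {b} := by
            rw [Multiset.Nodup.ext hndr (Multiset.nodup_singleton b)]
            intro y
            simp only [Multiset.mem_singleton]
            constructor
            · intro hy
              by_contra hyb
              have hya : y ≠ a := fun hh => har (hh ▸ hy)
              have : (Equiv.swap a b) y ∈ l.leaves := by
                rw [← hlv1]; exact Multiset.mem_map_of_mem _ hy
              rw [Equiv.swap_apply_of_ne_of_ne hya hyb] at this
              exact Multiset.disjoint_left.mp hdisj this hy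
            · rintro rfl; exact hbr
          rw [leaves_eq_singleton hleql, leaves_eq_singleton hleqr]
          exact .base
      · -- a ∈ r, b ∈ l
        rw [hrel] at hfix
        have hbr : b ∉ r.leaves := fun hh => Multiset.disjoint_left.mp hdisj hbl hh
        have hal : a ∉ l.leaves := fun hh => Multiset.disjoint_left.mp hdisj hh har
        rw [norm] at hfix
        split_ifs at hfix with hcond
        · exfalso
          injection hfix with h1 h2
          have hlv : l.leaves = (l.relabel (Equiv.swap a b)).leaves := by
            conv_lhs => rw [← h1]
            rw [leaves_norm]
          rw [leaves_relabel] at hlv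
          have hcnt := congrArg (Multiset.count b) hlv
          have : Multiset.count b (Multiset.map (⇑(Equiv.swap a b)) l.leaves)
              = Multiset.count a l.leaves := by
            have := Multiset.count_map_eq_count' (⇑(Equiv.swap a b)) l.leaves
              (Equiv.swap a b).injective a
            rwa [Equiv.swap_apply_left] at this
          rw [this, Multiset.count_eq_zero_of_notMem hal] at hcnt
          rw [← Multiset.count_pos] at hbl
          omega
        · exfalso
          injection hfix with h1 h2
          have hlv1 : Multiset.map (⇑(Equiv.swap a b)) r.leaves = l.leaves := by
            rw [← leaves_relabel, ← leaves_norm (r.relabel (Equiv.swap a b)), h1]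
          have hlv2 : Multiset.map (⇑(Equiv.swap a b)) l.leaves = r.leaves := by
            rw [← leaves_relabel, ← leaves_norm (l.relabel (Equiv.swap a b)), h2]
          have hleql : l.leaves = {b} := by
            rw [Multiset.Nodup.ext hndl (Multiset.nodup_singleton b)]
            intro y
            simp only [Multiset.mem_singleton]
            constructor
            · intro hy
              by_contra hyb
              have hya : y ≠ a := fun hh => hal (hh ▸ hy)
              have : (Equiv.swap a b) y ∈ r.leaves := by
                rw [← hlv2]; exact Multiset.mem_map_of_mem _ hy
              rw [Equiv.swap_apply_of_ne_of_ne hya hyb] at this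
              exact Multiset.disjoint_left.mp hdisj hy this
            · rintro rfl; exact hbl
          have hleqr : r.leaves = {a} := by
            rw [Multiset.Nodup.ext hndr (Multiset.nodup_singleton a)]
            intro y
            simp only [Multiset.mem_singleton]
            constructor
            · intro hy
              by_contra hya
              have hyb : y ≠ b := fun hh => hbr (hh ▸ hy)
              have : (Equiv.swap a b) y ∈ l.leaves := by
                rw [← hlv1]; exact Multiset.mem_map_of_mem _ hy
              rw [Equiv.swap_apply_of_ne_of_ne hya hyb] at this
              exact Multiset.disjoint_left.mp hdisj this hy
            · rintro rfl; exact har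
          have := hle
          rw [leaves_eq_singleton hleql, leaves_eq_singleton hleqr] at this
          show False
          exact absurd this (not_le.mpr hab)
      · -- a, b ∈ r
        have hfixl : l.relabel (Equiv.swap a b) = l := by
          apply relabel_id_on
          intro y hy
          apply Equiv.swap_apply_of_ne_of_ne
          · rintro rfl; exact Multiset.disjoint_left.mp hdisj hy har
          · rintro rfl; exact Multiset.disjoint_left.mp hdisj hy hbr
        rw [hrel, hfixl] at hfix
        have hlv : (r.relabel (Equiv.swap a b)).leaves = r.leaves := by
          rw [leaves_relabel, map_swap_self hndr har hbr]
        rw [norm, mkey_congr hlv, if_pos hle, hl.norm_eq] at hfix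
        injection hfix with h1 h2
        exact .right (cherried_of_fixed hab hr hndr har hbr h2)

end Cherry
end RTree
-- ===================== chunk 5 =====================

open RTree in
theorem main_count {α : Type u} [LinearOrder α] {a b : α} (hab : a < b)
    (A : Finset α) (ha : a ∈ A) (hb : b ∈ A) :
    (fixedTrees (Equiv.swap a b) A).ncard = dfac (A.card - 1) := by
  have hne : a ≠ b := hab.ne
  have hAnd : A.val.Nodup := A.nodup
  set S : Set (RTree α) := {t | IsNorm t ∧ t.leaves = A.val ∧ Cherried a b t} with hS
  set N : Set (RTree α) := {t | IsNorm t ∧ t.leaves = (A.erase b).val} with hN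
  have hstep1 : fixedTrees (Equiv.swap a b) A = (Quot.mk RTree.TEquiv) '' S := by
    ext x
    constructor
    · rintro ⟨hx1, hx2⟩
      obtain ⟨t, rfl⟩ := Quot.exists_rep x
      have hlt : t.leaves = A.val := hx1
      have hndt : t.leaves.Nodup := by rw [hlt]; exact hAnd
      refine ⟨t.norm, ⟨isNorm_norm t, ?_, ?_⟩, (Quot.sound (tequiv_norm t)).symm⟩
      · rw [leaves_norm, hlt]
      · have hndrel : (t.relabel (Equiv.swap a b)).leaves.Nodup := by
          rw [leaves_relabel]
          exact hndt.map (Equiv.swap a b).injective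
        have hq : Quot.mk RTree.TEquiv (t.relabel (Equiv.swap a b))
            = Quot.mk RTree.TEquiv t := hx2
        have h1 : (t.relabel (Equiv.swap a b)).norm = t.norm :=
          (mk_eq_iff_norm_eq hndrel).mp hq
        have h3 : (t.relabel (Equiv.swap a b)).norm = (t.norm.relabel (Equiv.swap a b)).norm :=
          TEquiv.norm_eq ((tequiv_norm t).relabel_congr _) hndrel
        apply cherried_of_fixed hab (isNorm_norm t)
          (by rw [leaves_norm]; exact hndt)
          (by rw [leaves_norm, hlt]; exact Finset.mem_val.mpr ha)
          (by rw [leaves_norm, hlt]; exact Finset.mem_val.mpr hb)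
        exact h3.symm.trans h1
    · rintro ⟨u, ⟨hu1, hu2, hu3⟩, rfl⟩
      refine ⟨hu2, ?_⟩
      exact Quot.sound (tequiv_relabel_of_cherried hu3 (by rw [hu2]; exact hAnd))
  have hstep2 : Set.InjOn (Quot.mk RTree.TEquiv) S := by
    rintro u ⟨hu1, hu2, -⟩ u' ⟨hu1', hu2', -⟩ h
    have := (mk_eq_iff_norm_eq (by rw [hu2]; exact hAnd)).mp h
    rwa [hu1.norm_eq, hu1'.norm_eq] at this
  have hstep3 : S = expa a b '' N := by
    ext u
    constructor
    · rintro ⟨hu1, hu2, hu3⟩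
      have hnd : u.leaves.Nodup := by rw [hu2]; exact hAnd
      refine ⟨contr a b u, ⟨isNorm_contr hab.le hu1, ?_⟩, hu3.expa_contr hne hnd⟩
      rw [leaves_contr hne hu3 hnd, hu2, Finset.erase_val]
    · rintro ⟨t, ⟨ht1, ht2⟩, rfl⟩
      have hndt : t.leaves.Nodup := by rw [ht2]; exact (A.erase b).nodup
      have hat : a ∈ t.leaves := by
        rw [ht2]
        exact Finset.mem_val.mpr (Finset.mem_erase.mpr ⟨hne, ha⟩)
      refine ⟨isNorm_expa hab.le ht1, ?_, cherried_expa hat⟩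
      rw [leaves_expa, Multiset.count_eq_one_of_mem hndt hat, Multiset.replicate_one, ht2,
        Finset.erase_val, add_comm, Multiset.singleton_add,
        Multiset.cons_erase (Finset.mem_val.mpr hb)]
  have hstep4 : Set.InjOn (expa a b) N := fun s _ t _ h => expa_inj s t h
  rw [hstep1]
  refine (Set.ncard_image_of_injOn hstep2).trans ?_
  rw [hstep3, Set.ncard_image_of_injOn hstep4]
  have hcount := count_norm (A.erase b) ⟨a, Finset.mem_erase.mpr ⟨hne, ha⟩⟩
  rw [Finset.card_erase_of_mem hb] at hcount
  exact hcount

/-- The number of phylogenetic trees on n ≥ 2 leaves fixed by a single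
transposition (cycle type λ = (2,1^{n−2})) equals 1 for n = 2 and
(2(n−2)−1)·(2(n−3)−1)⋯1 = (2n−5)!! for n ≥ 3. -/
theorem stmt18 (n : ℕ) (hn : 2 ≤ n) (σ : Equiv.Perm (Fin n)) (hσ : σ.IsSwap) :
    (n = 2 → (fixedTrees σ Finset.univ).ncard = 1) ∧
    (3 ≤ n → (fixedTrees σ Finset.univ).ncard =
      ∏ j ∈ Finset.range (n - 2), (2 * j + 1)) := by
  obtain ⟨x, y, hxy, rfl⟩ := hσ
  have hs : Equiv.swap x y = Equiv.swap (min x y) (max x y) := by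
    rcases le_total x y with h | h
    · rw [min_eq_left h, max_eq_right h]
    · rw [min_eq_right h, max_eq_left h, Equiv.swap_comm]
  have hab : min x y < max x y := min_lt_max.mpr hxy
  have hmain := main_count hab Finset.univ (Finset.mem_univ _) (Finset.mem_univ _)
  rw [Finset.card_univ, Fintype.card_fin] at hmain
  rw [hs]
  constructor
  · rintro rfl
    have hd : RTree.dfac (2 - 1) = 1 := by simp [RTree.dfac]
    convert hmain.trans hd using 3
    try congr!
  · intro h3
    have hd : RTree.dfac (n - 1) = ∏ j ∈ Finset.range (n - 2), (2 * j + 1) := by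
      have h21 : n - 1 - 1 = n - 2 := by omega
      rw [RTree.dfac, h21]
    convert hmain.trans hd using 3
    try congr!
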